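/- For every integer N ≥ 3, every real q > 0, and all real θ, θ' such that sinh(η+θ), sinh(η+θ'), sinh(η+θ+θ') are nonzero, the baxterized braid matrix R̂(θ) = I_{N²} + K(θ)·P₀' satisfies the braid (Yang–Baxter) relation R̂₁₂(θ)·R̂₂₃(θ+θ')·R̂₁₂(θ') = R̂₂₃(θ')·R̂₁₂(θ+θ')·R̂₂₃(θ), where R̂₁₂(θ) = R̂(θ)⊗I_N and R̂₂₃(θ) = I_N⊗R̂(θ) are N³×N³ matrices. -/

import Mathlib

open Matrix BigOperators

noncomputable section

/-- The `ρ`-values: `(ρ₁,…,ρ_N) = (n−1/2,…,1/2,0,−1/2,…,−n+1/2)` for `N = 2n+1`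
and `(n−1,…,1,0,0,−1,…,−n+1)` for `N = 2n` (here `i : Fin N` is the 0-based index). -/
def rho (N : ℕ) (i : Fin N) : ℝ :=
  let d : ℝ := ((N : ℝ) - 1) / 2 - (i : ℝ)
  if 0 < d then d - 1 / 2 else if d < 0 then d + 1 / 2 else 0

/-- `P₀' = Σ_{i,j} q^{ρ_{j'}−ρ_j} (ij)⊗(i'j')`, where `i' = N−i+1` (0-based: `Fin.rev`). -/
def P0' (N : ℕ) (q : ℝ) : Matrix (Fin N × Fin N) (Fin N × Fin N) ℂ :=
  Matrix.of fun p s =>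
    if p.2 = p.1.rev ∧ s.2 = s.1.rev then ((q ^ (rho N s.1.rev - rho N s.1) : ℝ) : ℂ) else 0

/-- The permutation matrix `P = Σ_{i,j} (ij)⊗(ji)`. -/
def Pmat (N : ℕ) : Matrix (Fin N × Fin N) (Fin N × Fin N) ℂ :=
  Matrix.of fun p s => if s = (p.2, p.1) then 1 else 0

/-- `K(θ) = −sinh θ / sinh(η+θ)`. -/
def Kf (η θ : ℝ) : ℝ := -Real.sinh θ / Real.sinh (η + θ)

/-- The braid matrix `R̂(θ) = I + K(θ)·P₀'`. -/
def Rhat (N : ℕ) (q η θ : ℝ) : Matrix (Fin N × Fin N) (Fin N × Fin N) ℂ :=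
  1 + (Kf η θ : ℂ) • P0' N q

/-- `t^{(1)}(θ) = P·R̂(θ)`; the block `t^{(1)}_{ij}(θ)` has entries `t^{(1)}(θ) (i,a) (j,b)`. -/
def tmat (N : ℕ) (q η θ : ℝ) : Matrix (Fin N × Fin N) (Fin N × Fin N) ℂ :=
  Pmat N * Rhat N q η θ

/-- The monodromy blocks: `mono N q η θ r (i,a) (j,b) = t^{(r)}_{ij}(θ) (a,b)` where
`t^{(r)}_{ij} = Σ_k t^{(1)}_{ik} ⊗ t^{(r−1)}_{kj}`. -/
def mono (N : ℕ) (q η θ : ℝ) :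
    (r : ℕ) → Matrix (Fin N × (Fin r → Fin N)) (Fin N × (Fin r → Fin N)) ℂ
  | 0 => Matrix.of fun p s => if p.1 = s.1 then 1 else 0
  | r + 1 => Matrix.of fun p s =>
      ∑ k : Fin N, tmat N q η θ (p.1, p.2 0) (k, s.2 0) *
        mono N q η θ r (k, Fin.tail p.2) (s.1, Fin.tail s.2)

/-- The order-`r` transfer matrix `T^{(r)}(θ) = Σ_i t^{(r)}_{ii}(θ)` acting on `(ℂ^N)^{⊗r}`. -/
def Transfer (N : ℕ) (q η θ : ℝ) (r : ℕ) : Matrix (Fin r → Fin N) (Fin r → Fin N) ℂ :=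
  Matrix.of fun a b => ∑ i : Fin N, mono N q η θ r (i, a) (i, b)

/-- The order-2 transfer matrix `T^{(2)}(θ) = Σ_{i,k} t^{(1)}_{ik}(θ) ⊗ t^{(1)}_{ki}(θ)`
acting on `ℂ^N ⊗ ℂ^N` with basis `|ab⟩`. -/
def Transfer2 (N : ℕ) (q η θ : ℝ) : Matrix (Fin N × Fin N) (Fin N × Fin N) ℂ :=
  Matrix.of fun p s =>
    ∑ i : Fin N, ∑ k : Fin N, tmat N q η θ (i, p.1) (k, s.1) * tmat N q η θ (k, p.2) (i, s.2)

/-- The quantum integer `[m]_q`. -/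
def qint (q : ℝ) (m : ℕ) : ℝ :=
  if q = 1 then (m : ℝ) else (q ^ m - q⁻¹ ^ m) / (q - q⁻¹)

/-- Standard basis vector. -/
def bv {ι : Type*} [DecidableEq ι] (a : ι) : ι → ℂ := fun c => if c = a then 1 else 0

open Kronecker

/-- `R̂₁₂(θ) = R̂(θ) ⊗ I_N`, as an `N³×N³` matrix. -/
def R12 (N : ℕ) (q η θ : ℝ) : Matrix (Fin N × Fin N × Fin N) (Fin N × Fin N × Fin N) ℂ :=
  Matrix.reindex (Equiv.prodAssoc (Fin N) (Fin N) (Fin N))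
    (Equiv.prodAssoc (Fin N) (Fin N) (Fin N))
    (Rhat N q η θ ⊗ₖ (1 : Matrix (Fin N) (Fin N) ℂ))

/-- `R̂₂₃(θ) = I_N ⊗ R̂(θ)`, as an `N³×N³` matrix. -/
def R23 (N : ℕ) (q η θ : ℝ) : Matrix (Fin N × Fin N × Fin N) (Fin N × Fin N × Fin N) ℂ :=
  (1 : Matrix (Fin N) (Fin N) ℂ) ⊗ₖ Rhat N q η θ

/-!
`P₀'` is the rank-one "cup–cap" matrix `|u⟩⟨v|` with `u = ∑ᵢ |i, i'⟩` and
`v = ∑ⱼ q^(ρ_{j'} - ρ_j) |j, j'⟩`. Since the weights of `j` and `j'` are inverse to each other,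
`e₁ = P₀' ⊗ I` and `e₂ = I ⊗ P₀'` satisfy the Temperley–Lieb relations `eᵢ² = δ eᵢ`,
`e₁e₂e₁ = e₁`, `e₂e₁e₂ = e₂` with loop value `δ = ⟨v, u⟩ = ∑ⱼ q^(ρ_{j'} - ρ_j) = [N-1]_q + 1`,
which is `2 cosh η`. In the Temperley–Lieb algebra,
`(1 + a e₁)(1 + b e₂)(1 + c e₁) = (1 + c e₂)(1 + b e₁)(1 + a e₂)` as soon as
`a + c + δac + abc = b`, and for `a = K(θ)`, `b = K(θ+θ')`, `c = K(θ')` this is an identity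
between hyperbolic sines.
-/

theorem temperleyLieb_baxterization {k R : Type*} [CommRing k] [Ring R] [Algebra k R]
    {A B : R} {δ a b c : k} (hA : A * A = δ • A) (hB : B * B = δ • B)
    (hABA : A * B * A = A) (hBAB : B * A * B = B) (h : a + c + δ * a * c + a * b * c = b) :
    (1 + a • A) * (1 + b • B) * (1 + c • A) = (1 + c • B) * (1 + b • A) * (1 + a • B) := by
  simp only [mul_add, add_mul, one_mul, mul_one, smul_mul_assoc, mul_smul_comm, smul_smul,
    hA, hB, hABA, hBAB]
  simp only [smul_add, smul_smul]
  match_scalars <;> first | ring1 | linear_combination h | linear_combination -h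

namespace Matrix

variable {ι R : Type*} [DecidableEq ι] [CommSemiring R]

def onFirstTwo (M : Matrix (ι × ι) (ι × ι) R) : Matrix (ι × ι × ι) (ι × ι × ι) R :=
  reindex (Equiv.prodAssoc ι ι ι) (Equiv.prodAssoc ι ι ι) (M ⊗ₖ 1)

def onLastTwo (M : Matrix (ι × ι) (ι × ι) R) : Matrix (ι × ι × ι) (ι × ι × ι) R :=
  1 ⊗ₖ M

@[simp]
theorem onFirstTwo_apply (M : Matrix (ι × ι) (ι × ι) R) (a b c d e f : ι) :
    onFirstTwo M (a, b, c) (d, e, f) = M (a, b) (d, e) * (1 : Matrix ι ι R) c f :=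
  rfl

@[simp]
theorem onLastTwo_apply (M : Matrix (ι × ι) (ι × ι) R) (a b c d e f : ι) :
    onLastTwo M (a, b, c) (d, e, f) = (1 : Matrix ι ι R) a d * M (b, c) (e, f) :=
  rfl

theorem onFirstTwo_one_add_smul (c : R) (M : Matrix (ι × ι) (ι × ι) R) :
    onFirstTwo (1 + c • M) = 1 + c • onFirstTwo M := by
  simp [onFirstTwo, add_kronecker, smul_kronecker, submatrix_add, submatrix_smul]

theorem onLastTwo_one_add_smul (c : R) (M : Matrix (ι × ι) (ι × ι) R) :
    onLastTwo (1 + c • M) = 1 + c • onLastTwo M := by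
  simp [onLastTwo, kronecker_add, kronecker_smul]

theorem onFirstTwo_smul (c : R) (M : Matrix (ι × ι) (ι × ι) R) :
    onFirstTwo (c • M) = c • onFirstTwo M := by
  simp [onFirstTwo, smul_kronecker, submatrix_smul]

theorem onLastTwo_smul (c : R) (M : Matrix (ι × ι) (ι × ι) R) :
    onLastTwo (c • M) = c • onLastTwo M := by
  simp [onLastTwo, kronecker_smul]

def cupCap (σ : ι → ι) (w : ι → R) : Matrix (ι × ι) (ι × ι) R :=
  of fun p s => if p.2 = σ p.1 ∧ s.2 = σ s.1 then w s.1 else 0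

variable [Fintype ι]

theorem onFirstTwo_mul (M M' : Matrix (ι × ι) (ι × ι) R) :
    onFirstTwo (M * M') = onFirstTwo M * onFirstTwo M' := by
  simp only [onFirstTwo, reindex_apply, submatrix_mul_equiv, ← mul_kronecker_mul, mul_one]

theorem onLastTwo_mul (M M' : Matrix (ι × ι) (ι × ι) R) :
    onLastTwo (M * M') = onLastTwo M * onLastTwo M' := by
  simp only [onLastTwo, ← mul_kronecker_mul, mul_one]

variable (σ : ι → ι) (w : ι → R)

theorem cupCap_mul_self : cupCap σ w * cupCap σ w = (∑ i, w i) • cupCap σ w := by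
  ext ⟨a, b⟩ ⟨d, e⟩
  simp only [mul_apply, cupCap, of_apply, smul_apply, smul_eq_mul, Fintype.sum_prod_type]
  by_cases h1 : b = σ a <;> by_cases h2 : e = σ d <;> simp [h1, h2, Finset.sum_mul]

variable {σ w} (hσ : Function.Involutive σ) (hw : ∀ i, w i * w (σ i) = 1)
include hσ hw

theorem onFirstTwo_mul_onLastTwo_mul_onFirstTwo_cupCap :
    onFirstTwo (cupCap σ w) * onLastTwo (cupCap σ w) * onFirstTwo (cupCap σ w) =
      onFirstTwo (cupCap σ w) := by
  ext ⟨a, b, c⟩ ⟨d, e, f⟩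
  simp only [mul_apply, Fintype.sum_prod_type, onFirstTwo_apply, onLastTwo_apply, cupCap, of_apply,
    one_apply, ite_and, mul_ite, ite_mul, mul_one, one_mul, mul_zero, zero_mul,
    Finset.sum_ite_irrel, Finset.sum_const_zero, Finset.sum_ite_eq', Finset.mem_univ, if_true, hσ _]
  by_cases h1 : b = σ a <;> by_cases h2 : e = σ d <;> by_cases h3 : c = f <;>
    simp [h1, h2, h3, eq_comm, hσ _, hw]

theorem onLastTwo_mul_onFirstTwo_mul_onLastTwo_cupCap :
    onLastTwo (cupCap σ w) * onFirstTwo (cupCap σ w) * onLastTwo (cupCap σ w) =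
      onLastTwo (cupCap σ w) := by
  ext ⟨a, b, c⟩ ⟨d, e, f⟩
  simp only [mul_apply, Fintype.sum_prod_type, onFirstTwo_apply, onLastTwo_apply, cupCap, of_apply,
    one_apply, ite_and, mul_ite, ite_mul, mul_one, one_mul, mul_zero, zero_mul,
    Finset.sum_ite_irrel, Finset.sum_const_zero, Finset.sum_ite_eq', Finset.mem_univ, if_true]
  have hw' (i : ι) : w (σ i) * w i = 1 := by simpa [hσ i] using hw (σ i)
  by_cases h1 : a = d <;> by_cases h2 : c = σ b <;> by_cases h3 : f = σ e <;>
    simp [h1, h2, h3, eq_comm, hσ.injective.eq_iff, hw']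

end Matrix

theorem Kf_add (η θ θ' : ℝ) (h1 : Real.sinh (η + θ) ≠ 0) (h2 : Real.sinh (η + θ') ≠ 0)
    (h3 : Real.sinh (η + (θ + θ')) ≠ 0) :
    Kf η θ + Kf η θ' + 2 * Real.cosh η * Kf η θ * Kf η θ' + Kf η θ * Kf η (θ + θ') * Kf η θ' =
      Kf η (θ + θ') := by
  unfold Kf
  field_simp
  simp only [Real.sinh_eq, Real.cosh_eq, Real.exp_add, Real.exp_neg]
  field_simp
  ring

theorem qint_eq_sum {q : ℝ} (hq : 0 < q) (m : ℕ) :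
    qint q m = ∑ k : Fin m, q ^ (2 * (k : ℝ) - m + 1) := by
  rw [Fin.sum_univ_eq_sum_range (fun k : ℕ => q ^ (2 * (k : ℝ) - m + 1)), qint]
  split_ifs with hq1
  · simp [hq1]
  have hden : q - q⁻¹ ≠ 0 := by
    intro h
    have : q * q = 1 := by field_simp at h; linarith
    exact hq1 (by nlinarith)
  have htel (k : ℕ) : (q - q⁻¹) * q ^ (2 * (k : ℝ) - m + 1) =
      q ^ (2 * ((k + 1 : ℕ) : ℝ) - m) - q ^ (2 * (k : ℝ) - m) := by
    rw [Nat.cast_succ, show 2 * ((k : ℝ) + 1) - m = 2 * k - m + 1 + 1 by ring,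
      Real.rpow_add_one hq.ne', Real.rpow_add_one hq.ne', Real.rpow_add_one hq.ne']
    field_simp
  rw [div_eq_iff hden, mul_comm, Finset.mul_sum, Finset.sum_congr rfl fun k _ => htel k,
    Finset.sum_range_sub (fun k : ℕ => q ^ (2 * (k : ℝ) - m)), show 2 * (m : ℝ) - m = m by ring]
  simp [Real.rpow_neg hq.le]

theorem rho_rev (N : ℕ) (x : Fin N) : rho N x.rev = -rho N x := by
  have hrev : ((x.rev : ℕ) : ℝ) = N - 1 - x := by
    rw [Fin.val_rev, Nat.cast_sub (by omega)]
    push_cast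
    ring
  unfold rho
  simp only [hrev]
  split_ifs <;> linarith

def Fin.middle (M : ℕ) : Fin (M + 1) := ⟨M / 2, by omega⟩

-- For odd `M` both central entries of `ρ` vanish and `M / 2` is the first of them.
theorem rho_middle (M : ℕ) : rho (M + 1) (Fin.middle M) = 0 := by
  unfold rho
  rw [show ((Fin.middle M : Fin (M + 1)) : ℕ) = M / 2 from rfl]
  obtain ⟨n, rfl | rfl⟩ := Nat.even_or_odd' M
  · rw [Nat.mul_div_cancel_left n two_pos]
    push_cast
    split_ifs <;> linarith
  · rw [show (2 * n + 1) / 2 = n by omega]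
    push_cast
    split_ifs <;> linarith

theorem rho_middle_succAbove (M : ℕ) (k : Fin M) :
    rho (M + 1) ((Fin.middle M).succAbove k) = ((M : ℝ) - 1) / 2 - k := by
  unfold rho
  rcases Fin.lt_or_le (Fin.castSucc k) (Fin.middle M) with h | h
  · have hk : 2 * (k : ℕ) + 2 ≤ M := by rw [Fin.lt_def] at h; simp [Fin.middle] at h; omega
    have hk' : 2 * (k : ℝ) + 2 ≤ M := by exact_mod_cast hk
    rw [Fin.succAbove_of_castSucc_lt _ _ h, Fin.val_castSucc]
    push_cast
    split_ifs <;> linarith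
  · have hk : M ≤ 2 * (k : ℕ) + 1 := by rw [Fin.le_def] at h; simp [Fin.middle] at h; omega
    have hk' : (M : ℝ) ≤ 2 * (k : ℝ) + 1 := by exact_mod_cast hk
    rw [Fin.succAbove_of_le_castSucc _ _ h, Fin.val_succ]
    push_cast
    split_ifs <;> linarith

theorem sum_qpow_rho_rev_sub_rho {q : ℝ} (hq : 0 < q) {N : ℕ} (hN : 0 < N) :
    ∑ x : Fin N, q ^ (rho N x.rev - rho N x) = qint q (N - 1) + 1 := by
  obtain ⟨M, rfl⟩ : ∃ M, N = M + 1 := ⟨N - 1, by omega⟩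
  rw [Fin.sum_univ_succAbove _ (Fin.middle M), qint_eq_sum hq, add_tsub_cancel_right, add_comm]
  simp only [rho_rev, rho_middle, rho_middle_succAbove]
  congr 1
  · refine Finset.sum_congr rfl fun k _ => ?_
    ring_nf
  · norm_num

def qWeight (N : ℕ) (q : ℝ) (d : Fin N) : ℂ := ((q ^ (rho N d.rev - rho N d) : ℝ) : ℂ)

theorem P0'_eq_cupCap (N : ℕ) (q : ℝ) : P0' N q = cupCap Fin.rev (qWeight N q) :=
  rfl

theorem qWeight_mul_qWeight_rev {q : ℝ} (hq : 0 < q) {N : ℕ} (d : Fin N) :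
    qWeight N q d * qWeight N q d.rev = 1 := by
  rw [qWeight, qWeight, Fin.rev_rev, ← Complex.ofReal_mul, ← Real.rpow_add hq]
  simp

theorem R12_eq (N : ℕ) (q η θ : ℝ) : R12 N q η θ = 1 + (Kf η θ : ℂ) • onFirstTwo (P0' N q) :=
  onFirstTwo_one_add_smul _ _

theorem R23_eq (N : ℕ) (q η θ : ℝ) : R23 N q η θ = 1 + (Kf η θ : ℂ) • onLastTwo (P0' N q) :=
  onLastTwo_one_add_smul _ _

theorem braid_relation_general (N : ℕ) (hN : 3 ≤ N) (q : ℝ) (hq : 0 < q)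
    (η : ℝ)
    (hη : Real.exp η + Real.exp (-η) = qint q (N - 1) + 1)
    (θ θ' : ℝ)
    (h1 : Real.sinh (η + θ) ≠ 0) (h2 : Real.sinh (η + θ') ≠ 0)
    (h3 : Real.sinh (η + (θ + θ')) ≠ 0) :
    R12 N q η θ * R23 N q η (θ + θ') * R12 N q η θ' =
      R23 N q η θ' * R12 N q η (θ + θ') * R23 N q η θ := by
  have hδ : ∑ d, qWeight N q d = ((2 * Real.cosh η : ℝ) : ℂ) := by
    unfold qWeight
    rw [← Complex.ofReal_sum, sum_qpow_rho_rev_sub_rho hq (by omega), ← hη, Real.cosh_eq]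
    ring_nf
  have hw := qWeight_mul_qWeight_rev hq (N := N)
  simp only [R12_eq, R23_eq, P0'_eq_cupCap]
  refine temperleyLieb_baxterization (δ := ((2 * Real.cosh η : ℝ) : ℂ)) ?_ ?_
    (onFirstTwo_mul_onLastTwo_mul_onFirstTwo_cupCap Fin.rev_involutive hw)
    (onLastTwo_mul_onFirstTwo_mul_onLastTwo_cupCap Fin.rev_involutive hw)
    (by exact_mod_cast Kf_add η θ θ' h1 h2 h3)
  · rw [← onFirstTwo_mul, cupCap_mul_self, onFirstTwo_smul, hδ]
  · rw [← onLastTwo_mul, cupCap_mul_self, onLastTwo_smul, hδ]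

/-- The baxterized braid matrix `R̂(θ) = I + K(θ)·P₀'` satisfies the braid (Yang–Baxter)
relation `R̂₁₂(θ)·R̂₂₃(θ+θ')·R̂₁₂(θ') = R̂₂₃(θ')·R̂₁₂(θ+θ')·R̂₂₃(θ)`. -/
theorem braid_relation (N : ℕ) (hN : 3 ≤ N) (q : ℝ) (hq : 0 < q)
    (η : ℝ) (hηpos : 0 < η)
    (hη : Real.exp η + Real.exp (-η) = qint q (N - 1) + 1)
    (θ θ' : ℝ)
    (h1 : Real.sinh (η + θ) ≠ 0) (h2 : Real.sinh (η + θ') ≠ 0)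
    (h3 : Real.sinh (η + (θ + θ')) ≠ 0) :
    R12 N q η θ * R23 N q η (θ + θ') * R12 N q η θ' =
      R23 N q η θ' * R12 N q η (θ + θ') * R23 N q η θ :=
  braid_relation_general N hN q hq η hη θ θ' h1 h2 h3
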